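/- arXiv:1009.4288 — 3 statements merged into one kernel-verified Lean document; each statement's English description precedes it below -/
import Mathlib

section
/- Let n ≥ 2 be an integer and let f : ℕ → ℝ be any function. Then (1/n!) · Σ_{σ ∈ S_n} (−1)^{c(σ)} F(σ) = f(n−1)/(n−1) − f(n)/n, where c(σ) denotes the number of orbits of σ on {1,…,n} (fixed points counted as orbits of size 1). -/
open Finset

/-- The number of orbits of a permutation of `Fin n` (fixed points counted as
orbits of size 1): the number of nontrivial cycles plus the number of fixed points. -/
def cyclesCount {n : ℕ} (σ : Equiv.Perm (Fin n)) : ℕ :=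
  Multiset.card σ.cycleType + (n - σ.cycleType.sum)

/-- The additive class function `F(σ) = ∑_{c orbit of σ} f(|c|)`, fixed points
contributing `f 1`. -/
noncomputable def addClassFun {n : ℕ} (f : ℕ → ℝ) (σ : Equiv.Perm (Fin n)) : ℝ :=
  (σ.cycleType.map f).sum + (n - σ.cycleType.sum) * f 1


/-!
Write `F σ = ∑ x, g |O_x(σ)|` with `g k = f k / k`, where `O_x(σ)` is the orbit of `x`, and
`(-1) ^ c(σ) = (-1) ^ n sgn σ`. Fix `x`. Left multiplication by a transposition of two points
outside `O_x(σ)` keeps `O_x(σ)` and flips the sign, so the signed number of permutations in which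
`x` has a given orbit `S` vanishes unless `|S| ≥ n - 1`. As the signs of `S_n` sum to zero, the
orbits of size `n - 1` contribute minus what the `(n - 1)!` full cycles do, and these all have
sign `(-1) ^ (n - 1)`. Hence `∑ σ, sgn σ • g |O_x(σ)| = (-1) ^ (n - 1) (n - 1)! (g n - g (n - 1))`
for every `x`, and summing over `x` gives the claim.
-/

open scoped Nat

namespace Equiv.Perm

lemma sameCycle_iff_exists_nat_pow_eq {β : Type*} [Finite β] {f : Perm β} {x y : β} :
    f.SameCycle x y ↔ ∃ k : ℕ, (f ^ k) x = y :=
  ⟨SameCycle.exists_nat_pow_eq, fun ⟨k, hk⟩ => ⟨k, by rw [zpow_natCast, hk]⟩⟩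

variable {α : Type*} [Fintype α] [DecidableEq α]

def orbitFinset (σ : Perm α) (x : α) : Finset α := {y | σ.SameCycle x y}

@[simp]
lemma mem_orbitFinset {σ : Perm α} {x y : α} : y ∈ σ.orbitFinset x ↔ σ.SameCycle x y := by
  simp [orbitFinset]

lemma orbitFinset_of_apply_eq_self {σ : Perm α} {x : α} (hx : σ x = x) :
    σ.orbitFinset x = {x} := by
  ext y
  simpa using ⟨fun h => (h.eq_of_left hx).symm, fun h => h ▸ SameCycle.refl σ x⟩

lemma orbitFinset_of_apply_ne_self {σ : Perm α} {x : α} (hx : σ x ≠ x) :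
    σ.orbitFinset x = (σ.cycleOf x).support := by
  ext y
  rw [mem_orbitFinset, mem_support_cycleOf_iff' hx]

lemma orbitFinset_eq_support_of_mem_cycleFactorsFinset {σ c : Perm α} {x : α}
    (hc : c ∈ σ.cycleFactorsFinset) (hx : x ∈ c.support) : σ.orbitFinset x = c.support := by
  rw [orbitFinset_of_apply_ne_self (mem_support.mp (mem_cycleFactorsFinset_support_le hc hx)),
    cycle_is_cycleOf hx hc]

lemma filter_support_cycleOf_eq {σ c : Perm α} (hc : c ∈ σ.cycleFactorsFinset) :
    {x ∈ σ.support | σ.cycleOf x = c} = c.support := by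
  ext y
  rw [mem_filter]
  constructor
  · rintro ⟨hy, rfl⟩
    exact mem_support_cycleOf_iff.mpr ⟨SameCycle.refl σ y, hy⟩
  · intro hy
    exact ⟨mem_cycleFactorsFinset_support_le hc hy, (cycle_is_cycleOf hy hc).symm⟩

lemma sum_card_orbitFinset {M : Type*} [AddCommMonoid M] (σ : Perm α) (g : ℕ → M) :
    ∑ x, g #(σ.orbitFinset x)
      = (σ.cycleType.map fun k => k • g k).sum + (Fintype.card α - #σ.support) • g 1 := by
  rw [← sum_add_sum_compl σ.support]
  congr 1
  · rw [← sum_fiberwise_of_maps_to (t := σ.cycleFactorsFinset) (g := σ.cycleOf)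
      fun x hx => cycleOf_mem_cycleFactorsFinset_iff.mpr hx, cycleType_def, Multiset.map_map,
      sum_map_val]
    refine sum_congr rfl fun c hc => ?_
    rw [filter_support_cycleOf_eq hc,
      sum_congr rfl fun x hx => by rw [orbitFinset_eq_support_of_mem_cycleFactorsFinset hc hx],
      sum_const]
    rfl
  · rw [sum_congr rfl fun x hx => by
        rw [orbitFinset_of_apply_eq_self (notMem_support.mp (mem_compl.mp hx)), card_singleton],
      sum_const, card_compl]

lemma mul_pow_apply_of_forall_apply_eq_self {g σ : Perm α} {x : α}
    (hg : ∀ y ∈ σ.orbitFinset x, g y = y) (k : ℕ) : ((g * σ) ^ k) x = (σ ^ k) x := by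
  induction k with
  | zero => rfl
  | succ k ih =>
    rw [pow_succ', mul_apply, ih, mul_apply, ← mul_apply σ, ← pow_succ']
    exact hg _ (mem_orbitFinset.mpr (sameCycle_iff_exists_nat_pow_eq.mpr ⟨k + 1, rfl⟩))

lemma orbitFinset_mul_of_forall_apply_eq_self {g σ : Perm α} {x : α}
    (hg : ∀ y ∈ σ.orbitFinset x, g y = y) : (g * σ).orbitFinset x = σ.orbitFinset x := by
  ext y
  simp only [mem_orbitFinset, sameCycle_iff_exists_nat_pow_eq,
    mul_pow_apply_of_forall_apply_eq_self hg]

lemma sum_sign_eq_zero_of_swap_mul_mem {s : Finset (Perm α)} {a b : α} (hab : a ≠ b)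
    (hs : ∀ σ ∈ s, swap a b * σ ∈ s) : ∑ σ ∈ s, (sign σ : ℤ) = 0 := by
  refine sum_involution (fun σ _ => swap a b * σ) (fun σ _ => ?_) (fun σ _ _ h => ?_) hs
    (fun σ _ => swap_mul_self_mul a b σ)
  · simp [sign_mul, sign_swap hab]
  · exact hab (swap_eq_one_iff.mp (mul_eq_right.mp h))

lemma sum_sign_eq_zero [Nontrivial α] : ∑ σ : Perm α, (sign σ : ℤ) = 0 :=
  have ⟨_, _, hab⟩ := exists_pair_ne α
  sum_sign_eq_zero_of_swap_mul_mem hab fun _ _ => mem_univ _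

lemma sum_sign_filter_orbitFinset_eq_zero {x : α} {S : Finset α} (hS : 1 < #Sᶜ) :
    ∑ σ with σ.orbitFinset x = S, (sign σ : ℤ) = 0 := by
  obtain ⟨a, ha, b, hb, hab⟩ := one_lt_card.mp hS
  refine sum_sign_eq_zero_of_swap_mul_mem hab fun σ hσ => ?_
  rw [mem_filter] at hσ ⊢
  refine ⟨mem_univ _, (orbitFinset_mul_of_forall_apply_eq_self fun y hy => ?_).trans hσ.2⟩
  rw [hσ.2] at hy
  exact swap_apply_of_ne_of_ne (fun h => mem_compl.mp ha (h ▸ hy))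
    (fun h => mem_compl.mp hb (h ▸ hy))

lemma sum_sign_filter_card_orbitFinset_eq_zero {x : α} {k : ℕ} (hk : k + 2 ≤ Fintype.card α) :
    ∑ σ with #(σ.orbitFinset x) = k, (sign σ : ℤ) = 0 := by
  rw [← sum_fiberwise_of_maps_to (t := powersetCard k univ) (g := (·.orbitFinset x))]
  · refine sum_eq_zero fun S hS => ?_
    have hSk : #S = k := (mem_powersetCard.mp hS).2
    rw [filter_filter, filter_congr fun σ _ => and_iff_right_of_imp fun h => h ▸ hSk]
    exact sum_sign_filter_orbitFinset_eq_zero (by rw [card_compl]; omega)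
  · intro σ hσ
    simpa using (mem_filter.mp hσ).2

lemma orbitFinset_eq_univ_iff [Nontrivial α] {σ : Perm α} {x : α} :
    σ.orbitFinset x = univ ↔ σ.IsCycle ∧ σ.support = univ := by
  constructor
  · intro h
    have hsame : ∀ y, σ.SameCycle x y := fun y => mem_orbitFinset.mp (h ▸ mem_univ y)
    have hx : σ x ≠ x := fun hx =>
      have ⟨y, hy⟩ := exists_ne x
      hy ((hsame y).eq_of_left hx).symm
    have hmoved : ∀ y, σ y ≠ y := fun y => ((hsame y).apply_eq_self_iff.not).mp hx
    exact ⟨(isCycle_iff_sameCycle hx).mpr fun {y} => iff_of_true (hsame y) (hmoved y),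
      eq_univ_of_forall fun y => mem_support.mpr (hmoved y)⟩
  · rintro ⟨hσ, hsupp⟩
    have hmoved : ∀ y, σ y ≠ y := fun y => mem_support.mp (hsupp ▸ mem_univ y)
    exact eq_univ_of_forall fun y => mem_orbitFinset.mpr (hσ.sameCycle (hmoved x) (hmoved y))

lemma cycleType_eq_singleton_card_iff {σ : Perm α} :
    σ.cycleType = {Fintype.card α} ↔ σ.IsCycle ∧ σ.support = univ := by
  rw [← card_eq_iff_eq_univ]
  constructor
  · intro h
    exact ⟨card_cycleType_eq_one.mp (by simp [h]),
      by rw [← sum_cycleType, h, Multiset.sum_singleton]⟩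
  · rintro ⟨hσ, hcard⟩
    rw [hσ.cycleType, hcard]

lemma sum_sign_filter_card_orbitFinset_eq_card [Nontrivial α] (x : α) :
    ∑ σ with #(σ.orbitFinset x) = Fintype.card α, (sign σ : ℤ)
      = (-1) ^ (Fintype.card α + 1) * (Fintype.card α - 1)! := by
  have h2 : 2 ≤ Fintype.card α := Fintype.one_lt_card
  rw [filter_congr fun σ _ => by
      rw [card_eq_iff_eq_univ, orbitFinset_eq_univ_iff, ← cycleType_eq_singleton_card_iff],
    sum_congr rfl fun σ hσ => by rw [sign_of_cycleType, (mem_filter.mp hσ).2],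
    sum_const, card_of_cycleType_singleton h2 le_rfl, Nat.choose_self]
  simp [mul_comm]

lemma sum_sign_smul_card_orbitFinset [Nontrivial α] {M : Type*} [AddCommGroup M] (x : α)
    (g : ℕ → M) :
    ∑ σ : Perm α, (sign σ : ℤ) • g #(σ.orbitFinset x)
      = ((-1) ^ (Fintype.card α + 1) * (Fintype.card α - 1)! : ℤ)
          • (g (Fintype.card α) - g (Fintype.card α - 1)) := by
  set N := Fintype.card α
  have h2 : 2 ≤ N := Fintype.one_lt_card
  calc ∑ σ : Perm α, (sign σ : ℤ) • g #(σ.orbitFinset x)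
      = ∑ σ : Perm α, (sign σ : ℤ) • (g #(σ.orbitFinset x) - g (N - 1)) := by
        simp only [smul_sub, sum_sub_distrib, ← sum_smul, sum_sign_eq_zero, zero_smul, sub_zero]
    _ = ∑ k ∈ range (N + 1),
          (∑ σ with #(σ.orbitFinset x) = k, (sign σ : ℤ)) • (g k - g (N - 1)) := by
        rw [← sum_fiberwise_of_maps_to (t := range (N + 1)) (g := fun σ => #(σ.orbitFinset x))
          fun σ _ => mem_range_succ_iff.mpr (card_le_univ _)]
        refine sum_congr rfl fun k _ => ?_
        rw [sum_smul]
        exact sum_congr rfl fun σ hσ => by rw [(mem_filter.mp hσ).2]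
    _ = (∑ σ with #(σ.orbitFinset x) = N, (sign σ : ℤ)) • (g N - g (N - 1)) := by
        refine sum_eq_single N (fun k hk hkN => ?_) (fun h => absurd (self_mem_range_succ N) h)
        rcases eq_or_ne k (N - 1) with rfl | hk'
        · rw [sub_self, smul_zero]
        · rw [sum_sign_filter_card_orbitFinset_eq_zero (by rw [mem_range] at hk; omega), zero_smul]
    _ = _ := by rw [sum_sign_filter_card_orbitFinset_eq_card]

end Equiv.Perm

open Equiv Perm

lemma neg_one_pow_cyclesCount {R : Type*} [Ring R] {n : ℕ} (σ : Perm (Fin n)) :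
    (-1 : R) ^ cyclesCount σ = (-1) ^ n * (sign σ : ℤ) := by
  have hs : σ.cycleType.sum ≤ n := by simpa using sum_cycleType_le σ
  rw [cyclesCount, sign_of_cycleType]
  push_cast
  rw [← pow_add, neg_one_pow_eq_pow_mod_two, neg_one_pow_eq_pow_mod_two (n := n + _)]
  congr 1
  omega

lemma addClassFun_eq_sum_orbitFinset {n : ℕ} (f : ℕ → ℝ) (σ : Perm (Fin n)) :
    addClassFun f σ = ∑ x, f #(σ.orbitFinset x) / #(σ.orbitFinset x) := by
  have hs : #σ.support ≤ n := by simpa using card_le_univ σ.support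
  rw [sum_card_orbitFinset σ fun k => f k / k, addClassFun, Fintype.card_fin, nsmul_eq_mul,
    Nat.cast_sub hs, ← sum_cycleType]
  congr 1
  · refine congrArg _ (Multiset.map_congr rfl fun k hk => ?_)
    have : (k : ℝ) ≠ 0 := by have := two_le_of_mem_cycleType hk; positivity
    rw [nsmul_eq_mul, mul_div_cancel₀ _ this]
  · simp

theorem moebius_inversion_additive_class_functions
    (n : ℕ) (hn : 2 ≤ n) (f : ℕ → ℝ) :
    (1 / (Nat.factorial n) : ℝ) * ∑ σ : Equiv.Perm (Fin n), (-1 : ℝ) ^ (cyclesCount σ) * addClassFun f σ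
      = f (n - 1) / (n - 1) - f n / n := by
  have : Nontrivial (Fin n) := Fin.nontrivial_iff_two_le.mpr hn
  have hsum : ∑ σ : Perm (Fin n), (-1 : ℝ) ^ (cyclesCount σ) * addClassFun f σ
      = (-1) ^ n * ∑ x : Fin n, ∑ σ : Perm (Fin n),
          (sign σ : ℤ) • (fun k : ℕ => f k / k) #(σ.orbitFinset x) := by
    simp_rw [neg_one_pow_cyclesCount, addClassFun_eq_sum_orbitFinset, mul_sum, zsmul_eq_mul]
    rw [sum_comm]
    simp only [mul_assoc]
  rw [hsum, sum_congr rfl fun x _ => sum_sign_smul_card_orbitFinset x fun k : ℕ => f k / k,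
    sum_const, card_univ, Fintype.card_fin, ← Nat.mul_factorial_pred (by omega),
    nsmul_eq_mul, zsmul_eq_mul, Nat.cast_sub (by omega : 1 ≤ n)]
  have hn1 : (n : ℝ) - 1 ≠ 0 := sub_ne_zero.mpr (by exact_mod_cast (by omega : n ≠ 1))
  have hsq : (-1 : ℝ) ^ n * (-1) ^ n = 1 := by rw [← mul_pow]; simp
  push_cast
  field_simp
  linear_combination (f n - n * f n + n * f (n - 1)) * hsq
end

section
/- Let n ≥ 2 be an integer and let f : ℕ → ℝ be any function. Then Σ_{λ ⊢ n} ((−1)^{ℓ(λ)}/z_λ) · (Σ_{i=1}^{ℓ(λ)} f(λ_i)) = f(n−1)/(n−1) − f(n)/n, the outer sum running over all integer partitions λ of n. -/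
open Finset

/-- `z_λ = ∏_j j^{m_j(λ)} · m_j(λ)!` where `m_j(λ)` is the number of parts of `λ`
equal to `j`. -/
def zPartition {n : ℕ} (P : Nat.Partition n) : ℕ :=
  ∏ j ∈ P.parts.toFinset, j ^ (P.parts.count j) * (P.parts.count j).factorial

/-!
Write `A m = ∑_{λ ⊢ m} (-1)^{ℓ(λ)} / z_λ`. Removing one part `k` from `λ` lowers `ℓ(λ)` by one
and divides `z_λ` by `k · m_k(λ)`, so `∑_{λ ⊢ n} (-1)^{ℓ(λ)} m_k(λ) / z_λ = -A(n - k) / k`, and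
the left-hand side of the theorem equals `-∑_{k=1}^n A(n - k) f(k) / k`.
Taking `f k = k` gives `m A m = -∑_{k=1}^m A (m - k)`; since `A 0 = 1` and `A 1 = -1`,
strong induction shows `A m = 0` for `m ≥ 2` (the coefficients of `exp (-∑ t^k / k) = 1 - t`),
so only `k = n - 1, n` survive.
-/

def zMultiset (s : Multiset ℕ) : ℕ :=
  ∏ j ∈ s.toFinset, j ^ s.count j * (s.count j).factorial

lemma zMultiset_eq_prod_of_toFinset_subset {s : Multiset ℕ} {t : Finset ℕ}
    (hst : s.toFinset ⊆ t) : zMultiset s = ∏ j ∈ t, j ^ s.count j * (s.count j).factorial :=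
  prod_subset hst fun j _ hj => by
    rw [Multiset.count_eq_zero_of_notMem (by simpa using hj), pow_zero, Nat.factorial_zero, one_mul]

lemma zMultiset_cons (k : ℕ) (s : Multiset ℕ) :
    zMultiset (k ::ₘ s) = k * (s.count k + 1) * zMultiset s := by
  have hk : k ∈ insert k s.toFinset := mem_insert_self k _
  rw [zMultiset_eq_prod_of_toFinset_subset (Multiset.toFinset_cons k s).subset,
    zMultiset_eq_prod_of_toFinset_subset (subset_insert k s.toFinset),
    ← mul_prod_erase _ _ hk, ← mul_prod_erase _ _ hk,
    prod_congr rfl fun j hj => by rw [Multiset.count_cons_of_ne (ne_of_mem_erase hj)],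
    Multiset.count_cons_self, pow_succ, Nat.factorial_succ]
  ring

noncomputable def signedWeight (s : Multiset ℕ) : ℝ :=
  (-1) ^ Multiset.card s / zMultiset s

lemma signedWeight_cons_mul_count (k : ℕ) (s : Multiset ℕ) :
    signedWeight (k ::ₘ s) * (k ::ₘ s).count k = -(signedWeight s / k) := by
  rw [signedWeight, signedWeight, zMultiset_cons, Multiset.card_cons, Multiset.count_cons_self]
  push_cast
  rw [pow_succ]
  field_simp

noncomputable def signedWeightSum (n : ℕ) : ℝ :=
  ∑ P : Nat.Partition n, signedWeight P.parts

lemma signedWeightSum_zero : signedWeightSum 0 = 1 := by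
  simp [signedWeightSum, signedWeight, zMultiset]

lemma signedWeightSum_one : signedWeightSum 1 = -1 := by
  simp [signedWeightSum, signedWeight, zMultiset]

lemma sum_signedWeight_mul_count {n k : ℕ} (hk : 1 ≤ k) (hkn : k ≤ n) :
    ∑ P : Nat.Partition n, signedWeight P.parts * P.parts.count k
      = -(signedWeightSum (n - k) / k) := by
  have hnotMem : ∑ P : {P : Nat.Partition n // k ∉ P.parts},
      signedWeight P.1.parts * P.1.parts.count k = 0 :=
    sum_eq_zero fun P _ => by rw [Multiset.count_eq_zero_of_notMem P.2, Nat.cast_zero, mul_zero]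
  rw [← Fintype.sum_subtype_add_sum_subtype (fun P : Nat.Partition n => k ∈ P.parts), hnotMem,
    add_zero, ← (Nat.Partition.partitionWithPartEquiv hk hkn).symm.sum_comp, signedWeightSum,
    sum_div, ← sum_neg_distrib]
  refine sum_congr rfl fun Q _ => ?_
  rw [Nat.Partition.partitionWithPartEquiv_symm_apply_parts, signedWeight_cons_mul_count]

lemma Nat.Partition.sum_map_eq_sum_Icc_count {M : Type*} [AddCommMonoid M] {n : ℕ}
    (P : Nat.Partition n) (f : ℕ → M) :
    (P.parts.map f).sum = ∑ k ∈ Icc 1 n, P.parts.count k • f k := by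
  rw [sum_multiset_map_count]
  refine sum_subset (fun k hk => ?_) fun k _ hk => ?_
  · rw [Multiset.mem_toFinset] at hk
    exact mem_Icc.2 ⟨P.parts_pos hk, P.le_of_mem_parts hk⟩
  · rw [Multiset.count_eq_zero_of_notMem (by simpa using hk), zero_smul]

lemma sum_signedWeight_mul_sum_map (n : ℕ) (f : ℕ → ℝ) :
    ∑ P : Nat.Partition n, signedWeight P.parts * (P.parts.map f).sum
      = -∑ k ∈ Icc 1 n, signedWeightSum (n - k) * (f k / k) := by
  simp_rw [Nat.Partition.sum_map_eq_sum_Icc_count, nsmul_eq_mul, mul_sum]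
  rw [sum_comm, ← sum_neg_distrib]
  refine sum_congr rfl fun k hk => ?_
  obtain ⟨hk1, hkn⟩ := mem_Icc.1 hk
  simp_rw [← mul_assoc, ← sum_mul, sum_signedWeight_mul_count hk1 hkn]
  ring

lemma sum_Icc_signedWeightSum_sub_mul {n : ℕ} (hn : 2 ≤ n)
    (hvanish : ∀ j, 2 ≤ j → j < n → signedWeightSum j = 0) (g : ℕ → ℝ) :
    ∑ k ∈ Icc 1 n, signedWeightSum (n - k) * g k = g n - g (n - 1) := by
  obtain ⟨m, rfl⟩ : ∃ m, n = m + 2 := ⟨n - 2, by omega⟩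
  have hlow : ∑ k ∈ Icc 1 m, signedWeightSum (m + 2 - k) * g k = 0 :=
    sum_eq_zero fun k hk => by
      obtain ⟨hk1, hkm⟩ := mem_Icc.1 hk
      rw [hvanish _ (by omega) (by omega), zero_mul]
  rw [sum_Icc_succ_top (by omega), sum_Icc_succ_top (by omega), hlow,
    show m + 2 - (m + 1) = 1 by omega, Nat.sub_self, signedWeightSum_one, signedWeightSum_zero,
    show m + 2 - 1 = m + 1 by omega]
  ring

lemma signedWeightSum_eq_zero {m : ℕ} (hm : 2 ≤ m) : signedWeightSum m = 0 := by
  induction m using Nat.strong_induction_on with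
  | _ m ih =>
    have hcast := sum_signedWeight_mul_sum_map m (↑)
    simp_rw [← Nat.cast_multiset_sum, Nat.Partition.parts_sum, ← sum_mul] at hcast
    rw [sum_Icc_signedWeightSum_sub_mul hm (fun j hj hjm => ih j hjm hj),
      div_self (by norm_cast; omega), div_self (by norm_cast; omega), sub_self, neg_zero,
      ← signedWeightSum, mul_eq_zero] at hcast
    exact hcast.resolve_right (by norm_cast; omega)

theorem moebius_inversion_over_partitions (n : ℕ) (hn : 2 ≤ n) (f : ℕ → ℝ) :
    ∑ P : Nat.Partition n,
        ((-1 : ℝ) ^ (Multiset.card P.parts) / (zPartition P : ℝ)) * (P.parts.map f).sum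
      = f (n - 1) / (n - 1) - f n / n := by
  change ∑ P : Nat.Partition n, signedWeight P.parts * _ = _
  rw [sum_signedWeight_mul_sum_map,
    sum_Icc_signedWeightSum_sub_mul hn fun j hj _ => signedWeightSum_eq_zero hj,
    Nat.cast_pred (by omega)]
  ring
end

section
/- For a real number q > 0 with q ≠ 1 and integers k, l ≥ 2, let Cov(q,k,l) = (q−q²)^{k+l−3} · (1−q²) · {k−1}_q {l−1}_q / ({k+l−1}_q {k+l−2}_q {k+l−3}_q). Then: (i) if 0 < q < 1, Cov(q,k,l) > 0; (ii) if q > 1, Cov(q,k,l) > 0 when k+l is even and Cov(q,k,l) < 0 when k+l is odd. -/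
/-- The `q`-analog `{m}_q = (q^m - 1)/(q - 1)` of an integer `m`. -/
noncomputable def qAnalog (q : ℝ) (m : ℕ) : ℝ := (q ^ m - 1) / (q - 1)

/-- The asymptotic covariance of the rescaled `q`-characters `√n·χ^λ_q(k)` and
`√n·χ^λ_q(l)` under the `q`-Plancherel measure. -/
noncomputable def qCov (q : ℝ) (k l : ℕ) : ℝ :=
  (q - q ^ 2) ^ (k + l - 3) * (1 - q ^ 2) *
    (qAnalog q (k - 1) * qAnalog q (l - 1)) /
    (qAnalog q (k + l - 1) * qAnalog q (k + l - 2) * qAnalog q (k + l - 3))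

theorem sign_of_covariance
    (q : ℝ) (hq0 : 0 < q) (hq1 : q ≠ 1) (k l : ℕ) (hk : 2 ≤ k) (hl : 2 ≤ l) :
    (q < 1 → 0 < qCov q k l) ∧
      (1 < q → ((Even (k + l) → 0 < qCov q k l) ∧ (Odd (k + l) → qCov q k l < 0))) := by
  have hpos : ∀ m : ℕ, 1 ≤ m → 0 < qAnalog q m := by
    intro m hm
    unfold qAnalog
    rcases lt_or_gt_of_ne hq1 with h | h
    · apply div_pos_of_neg_of_neg
      · have : q ^ m < 1 := pow_lt_one₀ hq0.le h (by omega)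
        linarith
      · linarith
    · apply div_pos
      · have : 1 < q ^ m := one_lt_pow₀ h (by omega)
        linarith
      · linarith
  have hkl : 4 ≤ k + l := by omega
  have hD : 0 < qAnalog q (k + l - 1) * qAnalog q (k + l - 2) * qAnalog q (k + l - 3) :=
    mul_pos (mul_pos (hpos _ (by omega)) (hpos _ (by omega))) (hpos _ (by omega))
  have hAB : 0 < qAnalog q (k - 1) * qAnalog q (l - 1) :=
    mul_pos (hpos _ (by omega)) (hpos _ (by omega))
  constructor
  · intro h
    unfold qCov
    apply div_pos _ hD
    apply mul_pos (mul_pos _ _) hAB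
    · apply pow_pos; nlinarith
    · nlinarith
  · intro h
    have hb : q - q ^ 2 < 0 := by nlinarith
    have hc : 1 - q ^ 2 < 0 := by nlinarith
    constructor
    · intro he
      have ho : Odd (k + l - 3) := Nat.Even.sub_odd (by omega) he (by decide)
      unfold qCov
      apply div_pos _ hD
      apply mul_pos (mul_pos_of_neg_of_neg (ho.pow_neg hb) hc) hAB
    · intro ho
      have he : Even (k + l - 3) := Nat.Odd.sub_odd ho (by decide)
      unfold qCov
      apply div_neg_of_neg_of_pos _ hD
      apply mul_neg_of_neg_of_pos _ hAB
      exact mul_neg_of_pos_of_neg (he.pow_pos (by nlinarith : q - q ^ 2 ≠ 0)) hc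
end
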